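/- Let k ≤ l and w ∈ S_n, and let η ∈ B̃_{k,l}(w), i.e., η = α + β for some α ∈ A_l(w) and β ∈ A_k(w). Define η ∈ B_{k,l}(w) if there exist presentations η = α + β = α' + β' with α, α' ∈ A_l(w), β, β' ∈ A_k(w), and α ≠ α', α ≠ β', β ≠ α', β ≠ β'. Then: if k < l, η ∉ B_{k,l}(w) if and only if |η₂| = k; if k = l, η ∉ B_{k,l}(w) if and only if |η₂| ≥ k − 1. -/

import Mathlib

/-
Elements of `A_l(w)` are the sorted forms of the finite sets lying below the first `l` values
`F_l` of `w` in the Gale order, and Gale dominance is a condition on the counting functions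
`z ↦ #{x ∈ s | x < z}`. So a presentation `η = α + β` is a pair of sets `s`, `t` with
`s + t = η`, and in every presentation `s ∩ t = η₂`.

Exchange: for any `y ∈ t \ s` there is `x ∈ s \ t` such that swapping `x` and `y` gives a new
presentation. Take `z₁ ≤ y` the last point where `s` is tight against `F_l`, and `z₂ > y` the
first point where `t` is tight against `F_k`. Any `x ∈ s \ t` in `[z₁, z₂)` can be swapped
with `y`. If there is no such `x`, then `t` gains more elements than `s` on `[z₁, z₂)`, since
`y` counts for `t` and not for `s`. This is impossible: between a tight point of `s` and a later
tight point of `t`, the excess of `s` over `t` cannot decrease, because `F_k ⊆ F_l`.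

If `|η₂|` is small, one exchange gives a second presentation that differs from the first in all
four required ways. If `|η₂| = k`, then `t = η₂` is forced. If `k = l` and `|η₂| ≥ k - 1`,
then every `s'` equals `s` or `t`.
-/

/-- The first `l` values of `w`, as a finset of natural numbers. -/
def firstVals {n : ℕ} (w : Equiv.Perm (Fin n)) (l : ℕ) : Finset ℕ :=
  (Finset.univ.filter (fun j : Fin n => (j : ℕ) < l)).image (fun j => (w j : ℕ))

/-- `w^l`: the increasing rearrangement of the first `l` values of `w`. -/
def wSorted {n : ℕ} (w : Equiv.Perm (Fin n)) (l : ℕ) : List ℕ :=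
  (firstVals w l).sort (· ≤ ·)

/-- `A_l(w)`: strictly increasing sequences bounded entrywise by `w^l`. -/
def A {n : ℕ} (w : Equiv.Perm (Fin n)) (l : ℕ) : Set (List ℕ) :=
  {a | a.Chain' (· < ·) ∧ List.Forall₂ (· ≤ ·) a (wSorted w l)}

/-- `η ∈ B_{k,l}(w)`: `η` has two essentially different presentations as a sum of an
element of `A_l(w)` and an element of `A_k(w)`. -/
def Bmem {n : ℕ} (w : Equiv.Perm (Fin n)) (k l : ℕ) (η : Multiset ℕ) : Prop :=
  ∃ a ∈ A w l, ∃ b ∈ A w k, ∃ a' ∈ A w l, ∃ b' ∈ A w k,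
    (↑a + ↑b : Multiset ℕ) = η ∧ (↑a' + ↑b' : Multiset ℕ) = η ∧
    a ≠ a' ∧ a ≠ b' ∧ b ≠ a' ∧ b ≠ b'

theorem List.forall₂_le_iff_length_eq_and_countP_le {α : Type*} [LinearOrder α] {p q : List α}
    (hp : p.Pairwise (· ≤ ·)) (hq : q.Pairwise (· ≤ ·)) :
    List.Forall₂ (· ≤ ·) p q ↔
      p.length = q.length ∧ ∀ z, q.countP (· < z) ≤ p.countP (· < z) := by
  have countP_eq_zero {l : List α} {z : α} (h : ∀ x ∈ l, z ≤ x) : l.countP (· < z) = 0 :=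
    List.countP_eq_zero.mpr fun x hx => by simpa using h x hx
  induction p generalizing q with
  | nil => cases q <;> simp
  | cons a p ih =>
    cases q with
    | nil => simp
    | cons b q =>
      obtain ⟨hpa, hp⟩ := List.pairwise_cons.mp hp
      obtain ⟨hqb, hq⟩ := List.pairwise_cons.mp hq
      simp only [List.forall₂_cons, ih hp hq, List.length_cons, List.countP_cons,
        decide_eq_true_eq, Nat.add_right_cancel_iff]
      constructor
      · rintro ⟨hab, hlen, hcount⟩
        refine ⟨hlen, fun z => ?_⟩
        have := hcount z
        by_cases hbz : b < z
        · simp [hbz, hab.trans_lt hbz]; omega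
        · simp [hbz]; omega
      · rintro ⟨hlen, hcount⟩
        have hab : a ≤ b := by
          by_contra! hba
          have := hcount a
          simp [hba, countP_eq_zero hpa] at this
        refine ⟨hab, hlen, fun z => ?_⟩
        have := hcount z
        by_cases hbz : b < z
        · simp only [hbz, hab.trans_lt hbz, if_true] at this; omega
        · simp [countP_eq_zero fun x hx => (not_lt.mp hbz).trans (hqb x hx)]

open Finset

def countBelow (s : Finset ℕ) (z : ℕ) : ℕ := #{x ∈ s | x < z}

-- The counting form of "`s` lies entrywise below `F` once both are sorted".
def GaleLE (s F : Finset ℕ) : Prop :=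
  #s = #F ∧ ∀ z, countBelow F z ≤ countBelow s z

theorem countP_sort_lt (s : Finset ℕ) (z : ℕ) :
    (s.sort (· ≤ ·)).countP (· < z) = countBelow s z := by
  rw [← Multiset.coe_countP, sort_eq, Multiset.countP_eq_card_filter]
  rfl

theorem forall₂_sort_iff_galeLE (s F : Finset ℕ) :
    List.Forall₂ (· ≤ ·) (s.sort (· ≤ ·)) (F.sort (· ≤ ·)) ↔ GaleLE s F := by
  simp only [List.forall₂_le_iff_length_eq_and_countP_le (pairwise_sort _ _) (pairwise_sort _ _),
    length_sort, countP_sort_lt, GaleLE]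

theorem A_eq_image {n : ℕ} (w : Equiv.Perm (Fin n)) (l : ℕ) :
    A w l = (fun s => s.sort (· ≤ ·)) '' {s | GaleLE s (firstVals w l)} := by
  ext a
  simp only [A, Set.mem_image, wSorted]
  constructor
  · rintro ⟨ha, hle⟩
    have hsort : a.toFinset.sort (· ≤ ·) = a :=
      (List.toFinset_sort _ ha.pairwise.nodup).mpr (ha.pairwise.imp le_of_lt)
    exact ⟨a.toFinset, (forall₂_sort_iff_galeLE _ _).mp (by rwa [hsort]), hsort⟩
  · rintro ⟨s, hs, rfl⟩
    exact ⟨(sortedLT_sort s).isChain, (forall₂_sort_iff_galeLE _ _).mpr hs⟩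

theorem card_firstVals {n : ℕ} (w : Equiv.Perm (Fin n)) (l : ℕ) :
    #(firstVals w l) = min n l := by
  rw [firstVals, card_image_of_injective _ fun i j h => w.injective (Fin.val_injective h),
    Fin.card_filter_val_lt]

theorem firstVals_mono {n : ℕ} (w : Equiv.Perm (Fin n)) {k l : ℕ} (h : k ≤ l) :
    firstVals w k ⊆ firstVals w l :=
  image_subset_image fun j hj => by simp only [mem_filter, mem_univ, true_and] at hj ⊢; omega

section Exchange

variable {s t F Fl Fk : Finset ℕ}

theorem countBelow_add_card_window (s : Finset ℕ) {z₁ z₂ : ℕ} (h : z₁ ≤ z₂) :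
    countBelow s z₂ = countBelow s z₁ + #{x ∈ s | z₁ ≤ x ∧ x < z₂} := by
  rw [countBelow, countBelow, ← card_filter_add_card_filter_not (· < z₁), filter_filter,
    filter_filter]
  congr 3 <;> ext x <;> constructor <;> omega

theorem countBelow_insert_erase {x y : ℕ} (hx : x ∈ s) (hy : y ∉ s) (z : ℕ) :
    countBelow (insert y (s.erase x)) z + (if x < z then 1 else 0) =
      countBelow s z + (if y < z then 1 else 0) := by
  have hy' : y ∉ s.erase x := fun h => hy (mem_of_mem_erase h)
  simp only [countBelow, card_def, filter_val, ← Multiset.countP_eq_card_filter]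
  conv_rhs => rw [← Multiset.cons_erase (mem_val.mpr hx)]
  rw [insert_val_of_notMem hy', erase_val, Multiset.countP_cons, Multiset.countP_cons]
  omega

theorem GaleLE.insert_erase {x y : ℕ} (hs : GaleLE s F) (hx : x ∈ s) (hy : y ∉ s)
    (hslack : ∀ z, x < z → z ≤ y → countBelow F z < countBelow s z) :
    GaleLE (insert y (s.erase x)) F := by
  refine ⟨?_, fun z => ?_⟩
  · rw [card_insert_of_notMem fun h => hy (mem_of_mem_erase h), card_erase_add_one hx, hs.1]
  · have key := countBelow_insert_erase hx hy z
    have := hs.2 z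
    by_cases hxzy : x < z ∧ z ≤ y
    · have := hslack z hxzy.1 hxzy.2
      split_ifs at key <;> omega
    · split_ifs at key <;> omega

theorem countBelow_add_le_of_tight (hs : GaleLE s Fl) (ht : GaleLE t Fk) (hF : Fk ⊆ Fl)
    {z₁ z₂ : ℕ} (hz : z₁ ≤ z₂) (h₁ : countBelow s z₁ ≤ countBelow Fl z₁)
    (h₂ : countBelow t z₂ ≤ countBelow Fk z₂) :
    countBelow s z₁ + countBelow t z₂ ≤ countBelow s z₂ + countBelow t z₁ := by
  have hwin : #{x ∈ Fk | z₁ ≤ x ∧ x < z₂} ≤ #{x ∈ Fl | z₁ ≤ x ∧ x < z₂} :=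
    card_le_card (filter_subset_filter _ hF)
  have := countBelow_add_card_window Fl hz
  have := countBelow_add_card_window Fk hz
  have := hs.2 z₂
  have := ht.2 z₁
  omega

theorem countBelow_add_lt_of_window {y z₁ z₂ : ℕ} (hz₁ : z₁ ≤ y) (hz₂ : y < z₂) (hy : y ∈ t)
    (hys : y ∉ s) (hwin : ∀ x ∈ s, z₁ ≤ x → x < z₂ → x ∈ t) :
    countBelow s z₂ + countBelow t z₁ < countBelow s z₁ + countBelow t z₂ := by
  have hsub : {x ∈ s | z₁ ≤ x ∧ x < z₂} ⊂ {x ∈ t | z₁ ≤ x ∧ x < z₂} := by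
    rw [ssubset_iff_of_subset fun x hx => ?_]
    · exact ⟨y, mem_filter.mpr ⟨hy, hz₁, hz₂⟩, fun h => hys (mem_filter.mp h).1⟩
    · obtain ⟨hx, hz₁x, hxz₂⟩ := mem_filter.mp hx
      exact mem_filter.mpr ⟨hwin x hx hz₁x hxz₂, hz₁x, hxz₂⟩
  have := card_lt_card hsub
  have := countBelow_add_card_window s (hz₁.trans hz₂.le)
  have := countBelow_add_card_window t (hz₁.trans hz₂.le)
  omega

theorem GaleLE.exists_exchange (hs : GaleLE s Fl) (ht : GaleLE t Fk) (hF : Fk ⊆ Fl) {y : ℕ}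
    (hy : y ∈ t) (hys : y ∉ s) :
    ∃ x ∈ s, x ∉ t ∧ GaleLE (insert y (s.erase x)) Fl ∧ GaleLE (insert x (t.erase y)) Fk := by
  have hN : ∃ z, y < z ∧ countBelow t z ≤ countBelow Fk z := by
    obtain ⟨N, hN⟩ := exists_nat_subset_range Fk
    refine ⟨max N (y + 1), by omega, ?_⟩
    calc countBelow t _ ≤ #t := card_filter_le _ _
      _ = #Fk := ht.1
      _ = countBelow Fk _ := by
        rw [countBelow, filter_true_of_mem fun x hx =>
          (mem_range.mp (hN hx)).trans_le (le_max_left _ _)]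
  obtain ⟨z₁, hz₁y, hz₁, hz₁max⟩ : ∃ z₁ ≤ y, countBelow s z₁ ≤ countBelow Fl z₁ ∧
      ∀ z ≤ y, countBelow s z ≤ countBelow Fl z → z ≤ z₁ :=
    ⟨_, Nat.findGreatest_le y,
      Nat.findGreatest_spec (P := fun z => countBelow s z ≤ countBelow Fl z) (Nat.zero_le y)
        (by simp [countBelow]),
      fun z hz h => Nat.le_findGreatest hz h⟩
  obtain ⟨z₂, ⟨hyz₂, hz₂⟩, hz₂min⟩ : ∃ z₂, (y < z₂ ∧ countBelow t z₂ ≤ countBelow Fk z₂) ∧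
      ∀ z, y < z → countBelow t z ≤ countBelow Fk z → z₂ ≤ z :=
    ⟨_, Nat.find_spec hN, fun z hyz h => Nat.find_min' hN ⟨hyz, h⟩⟩
  by_cases hwin : ∃ x ∈ s, x ∉ t ∧ z₁ ≤ x ∧ x < z₂
  · obtain ⟨x, hx, hxt, hz₁x, hxz₂⟩ := hwin
    refine ⟨x, hx, hxt, hs.insert_erase hx hys fun z hxz hzy => ?_,
      ht.insert_erase hy hxt fun z hyz hzx => ?_⟩
    · by_contra! h
      have := hz₁max z hzy h
      omega
    · by_contra! h
      have := hz₂min z hyz h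
      omega
  · push Not at hwin
    have hz : z₁ ≤ z₂ := hz₁y.trans hyz₂.le
    have := countBelow_add_le_of_tight hs ht hF hz hz₁ hz₂
    have := countBelow_add_lt_of_window hz₁y hyz₂ hy hys fun x hx hz₁x hxz₂ =>
      by_contra fun hxt => (hwin x hx hxt hz₁x).not_gt hxz₂
    omega

end Exchange

def IsPresentation (Fl Fk : Finset ℕ) (η : Multiset ℕ) (s t : Finset ℕ) : Prop :=
  GaleLE s Fl ∧ GaleLE t Fk ∧ s.val + t.val = η

def HasTwoPresentations (Fl Fk : Finset ℕ) (η : Multiset ℕ) : Prop :=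
  ∃ s t s' t', IsPresentation Fl Fk η s t ∧ IsPresentation Fl Fk η s' t' ∧
    s ≠ s' ∧ s ≠ t' ∧ t ≠ s' ∧ t ≠ t'

section Presentations

variable {n : ℕ} (w : Equiv.Perm (Fin n)) (k l : ℕ) (η : Multiset ℕ)

theorem exists_presentation_iff :
    (∃ a ∈ A w l, ∃ b ∈ A w k, (↑a + ↑b : Multiset ℕ) = η) ↔
      ∃ s t, IsPresentation (firstVals w l) (firstVals w k) η s t := by
  simp only [A_eq_image, Set.exists_mem_image, Set.mem_ofPred_eq, sort_eq, IsPresentation]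
  exact ⟨fun ⟨s, hs, t, ht, h⟩ => ⟨s, t, hs, ht, h⟩, fun ⟨s, t, hs, ht, h⟩ => ⟨s, hs, t, ht, h⟩⟩

theorem bmem_iff :
    Bmem w k l η ↔ HasTwoPresentations (firstVals w l) (firstVals w k) η := by
  have hinj : Function.Injective (fun s : Finset ℕ => s.sort (· ≤ ·)) :=
    Function.LeftInverse.injective (g := List.toFinset) fun s => sort_toFinset s _
  simp only [Bmem, HasTwoPresentations, IsPresentation, A_eq_image, Set.exists_mem_image,
    Set.mem_ofPred_eq, sort_eq, hinj.ne_iff]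
  exact ⟨fun ⟨s, hs, t, ht, s', hs', t', ht', h, h', hne⟩ =>
      ⟨s, t, s', t', ⟨hs, ht, h⟩, ⟨hs', ht', h'⟩, hne⟩,
    fun ⟨s, t, s', t', ⟨hs, ht, h⟩, ⟨hs', ht', h'⟩, hne⟩ =>
      ⟨s, hs, t, ht, s', hs', t', ht', h, h', hne⟩⟩

end Presentations

theorem val_insert_erase_add_val_insert_erase {s t : Finset ℕ} {x y : ℕ} (hx : x ∈ s)
    (hxt : x ∉ t) (hy : y ∈ t) (hys : y ∉ s) :
    (insert y (s.erase x)).val + (insert x (t.erase y)).val = s.val + t.val := by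
  rw [insert_val_of_notMem fun h => hys (mem_of_mem_erase h),
    insert_val_of_notMem fun h => hxt (mem_of_mem_erase h), erase_val, erase_val,
    Multiset.cons_add, Multiset.add_cons, ← Multiset.cons_add, ← Multiset.add_cons,
    Multiset.cons_erase (mem_val.mpr hx), Multiset.cons_erase (mem_val.mpr hy)]

theorem inter_eq_of_val_add_val_eq {s t η₁ η₂ : Finset ℕ} (hd : Disjoint η₁ η₂)
    (h : s.val + t.val = η₁.val + 2 • η₂.val) : s ∩ t = η₂ := by
  ext x
  have hx := congrArg (Multiset.count x) h
  simp only [Multiset.count_add, Multiset.count_nsmul, Multiset.count_eq_of_nodup s.nodup,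
    Multiset.count_eq_of_nodup t.nodup, Multiset.count_eq_of_nodup η₁.nodup,
    Multiset.count_eq_of_nodup η₂.nodup, mem_val] at hx
  have : x ∈ η₁ → x ∉ η₂ := fun h => disjoint_left.mp hd h
  rw [mem_inter]
  split_ifs at hx <;> first | omega | tauto

namespace IsPresentation

variable {Fl Fk s t s' t' η₁ η₂ : Finset ℕ} {η : Multiset ℕ}

theorem exists_exchange (h : IsPresentation Fl Fk η s t) (hF : Fk ⊆ Fl) {y : ℕ} (hy : y ∈ t)
    (hys : y ∉ s) : ∃ x ∈ s, x ∉ t ∧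
      IsPresentation Fl Fk η (insert y (s.erase x)) (insert x (t.erase y)) := by
  obtain ⟨x, hx, hxt, hs', ht'⟩ := h.1.exists_exchange h.2.1 hF hy hys
  exact ⟨x, hx, hxt, hs', ht', (val_insert_erase_add_val_insert_erase hx hxt hy hys).trans h.2.2⟩

theorem hasTwoPresentations (h : IsPresentation Fl Fk η s t) (hF : Fk ⊆ Fl)
    (ht : #(s ∩ t) < #t) (hs : #(s ∩ t) + 2 ≤ #s) : HasTwoPresentations Fl Fk η := by
  obtain ⟨y, hy⟩ : (t \ s).Nonempty := by
    rw [← card_pos]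
    have := card_sdiff_add_card_inter t s
    rw [inter_comm] at this
    omega
  obtain ⟨hy, hys⟩ := mem_sdiff.mp hy
  obtain ⟨x, hx, hxt, h'⟩ := h.exists_exchange hF hy hys
  obtain ⟨e, he⟩ : ((s \ t).erase x).Nonempty := by
    rw [← card_pos, card_erase_of_mem (mem_sdiff.mpr ⟨hx, hxt⟩)]
    have := card_sdiff_add_card_inter s t
    omega
  obtain ⟨hex, he, het⟩ : e ≠ x ∧ e ∈ s ∧ e ∉ t := by simpa using he
  have hxy : x ≠ y := fun hxy => hxt (hxy ▸ hy)
  refine ⟨s, t, _, _, h, h', fun hs' => ?_, fun hs' => ?_, fun ht' => ?_, fun ht' => ?_⟩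
  · have := hs' ▸ hx
    simp [hxy] at this
  · have := hs' ▸ he
    simp [hex, het] at this
  · have := ht' ▸ het
    simp [hex, he] at this
  · have := ht' ▸ hy
    simp [hxy.symm] at this

theorem eq_of_card_le (h : IsPresentation Fl Fk (η₁.val + 2 • η₂.val) s t)
    (hd : Disjoint η₁ η₂) (hk : #Fk ≤ #η₂) : t = η₂ := by
  have hsub : η₂ ⊆ t := inter_eq_of_val_add_val_eq hd h.2.2 ▸ inter_subset_right
  exact (eq_of_subset_of_card_le hsub (h.2.1.1 ▸ hk)).symm

theorem eq_or_eq_of_card_le (h : IsPresentation Fl Fk (η₁.val + 2 • η₂.val) s t)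
    (h' : IsPresentation Fl Fk (η₁.val + 2 • η₂.val) s' t') (hd : Disjoint η₁ η₂)
    (hF : #Fk ≤ #Fl) (hl : #Fl ≤ #η₂ + 1) : s' = s ∨ s' = t := by
  have hη : s ∩ t = η₂ := inter_eq_of_val_add_val_eq hd h.2.2
  have hη' : η₂ ⊆ s' := inter_eq_of_val_add_val_eq hd h'.2.2 ▸ inter_subset_left
  have hmem : ∀ x ∈ s', x ∈ s ∨ x ∈ t := fun x hx => by
    have : x ∈ s.val + t.val := h.2.2 ▸ h'.2.2 ▸ Multiset.mem_add.mpr (Or.inl hx)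
    simpa using this
  have hle : #(s' \ η₂) ≤ 1 := by
    rw [card_sdiff_of_subset hη', h'.1.1]
    omega
  by_cases hs : s' ⊆ s
  · exact Or.inl (eq_of_subset_of_card_le hs (by rw [h.1.1, h'.1.1]))
  obtain ⟨c, hc, hcs⟩ := not_subset.mp hs
  have hct : c ∈ t := (hmem c hc).resolve_left hcs
  refine Or.inr (eq_of_subset_of_card_le (fun d hd => ?_) (by rw [h.2.1.1, h'.1.1]; exact hF))
  by_cases hdη : d ∈ η₂
  · exact (mem_inter.mp (hη ▸ hdη)).2
  · have hcη : c ∉ η₂ := fun hcη => hcs (mem_inter.mp (hη ▸ hcη)).1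
    rwa [card_le_one.mp hle d (mem_sdiff.mpr ⟨hd, hdη⟩) c (mem_sdiff.mpr ⟨hc, hcη⟩)]

end IsPresentation

/-- For `η ∈ B̃_{k,l}(w)`: if `k < l` then `η ∉ B_{k,l}(w)` iff `|η₂| = k`;
if `k = l` then `η ∉ B_{k,l}(w)` iff `|η₂| ≥ k - 1`. -/
theorem stmt16 (n : ℕ) (w : Equiv.Perm (Fin n)) (k l : ℕ) (hkl : k ≤ l)
    (η₁ η₂ : Finset ℕ) (hd : Disjoint η₁ η₂)
    (hc : η₁.card + 2 * η₂.card = k + l)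
    (htil : ∃ a ∈ A w l, ∃ b ∈ A w k, (↑a + ↑b : Multiset ℕ) = η₁.val + 2 • η₂.val) :
    (k < l → (¬ Bmem w k l (η₁.val + 2 • η₂.val) ↔ η₂.card = k)) ∧
    (k = l → (¬ Bmem w k l (η₁.val + 2 • η₂.val) ↔ k - 1 ≤ η₂.card)) := by
  obtain ⟨s, t, hst⟩ := (exists_presentation_iff w k l _).mp htil
  have hF := firstVals_mono w hkl
  have hcard : #s + #t = #η₁ + 2 * #η₂ := by simpa using congrArg Multiset.card hst.2.2
  have hFl := card_firstVals w l
  have hFk := card_firstVals w k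
  have hs := hst.1.1
  have ht := hst.2.1.1
  have hη₂ : #(s ∩ t) = #η₂ := by rw [inter_eq_of_val_add_val_eq hd hst.2.2]
  have hη₂t : #(s ∩ t) ≤ #t := card_le_card inter_subset_right
  rw [bmem_iff]
  refine ⟨fun hlt => ⟨fun hB => ?_, ?_⟩, fun hkeq => ⟨fun hB => ?_, ?_⟩⟩
  · by_contra hne
    exact hB (hst.hasTwoPresentations hF (by omega) (by omega))
  · rintro hk ⟨s, t, s', t', h, h', -, -, -, htt'⟩
    exact htt' ((h.eq_of_card_le hd (by omega)).trans (h'.eq_of_card_le hd (by omega)).symm)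
  · by_contra hne
    exact hB (hst.hasTwoPresentations hF (by omega) (by omega))
  · rintro hk ⟨s, t, s', t', h, h', hss', -, hts', -⟩
    rcases h.eq_or_eq_of_card_le h' hd (card_le_card hF) (by omega) with rfl | rfl
    exacts [hss' rfl, hts' rfl]
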